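/- For all x ≥ 0, x·φ(x) + (1 - Φ(x)) ≤ 1/2, where φ and Φ are the standard normal density and CDF. -/

import Mathlib

noncomputable def phi (x : ℝ) : ℝ := (Real.sqrt (2 * Real.pi))⁻¹ * Real.exp (-x ^ 2 / 2)

noncomputable def Phi (x : ℝ) : ℝ := ∫ t in Set.Iic x, phi t

/-!
Since `φ` is decreasing on `[0, ∞)`, `x φ(x) ≤ ∫₀ˣ φ = Φ(x) - Φ(0)`, and `Φ(0) = 1/2` by the
symmetry of `φ`.
-/

open MeasureTheory Set

lemma phi_eq_gaussianPDFReal : phi = ProbabilityTheory.gaussianPDFReal 0 1 := by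
  funext x
  simp [phi, ProbabilityTheory.gaussianPDFReal]

lemma integrable_phi : Integrable phi := by
  rw [phi_eq_gaussianPDFReal]
  exact ProbabilityTheory.integrable_gaussianPDFReal 0 1

lemma integral_phi : ∫ x, phi x = 1 := by
  rw [phi_eq_gaussianPDFReal]
  exact ProbabilityTheory.integral_gaussianPDFReal_eq_one 0 one_ne_zero

lemma phi_neg (x : ℝ) : phi (-x) = phi x := by
  simp [phi]

lemma phi_antitoneOn : AntitoneOn phi (Ici 0) := by
  intro s hs t _ hst
  unfold phi
  gcongr

lemma Phi_neg (x : ℝ) : Phi (-x) = 1 - Phi x := by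
  have htotal : Phi x + ∫ t in Ioi x, phi t = 1 :=
    (intervalIntegral.integral_Iic_add_Ioi integrable_phi.integrableOn
      integrable_phi.integrableOn).trans integral_phi
  have hreflect : Phi (-x) = ∫ t in Ioi x, phi t := by
    simpa [Phi, phi_neg] using (integral_comp_neg_Ioi x phi).symm
  linarith

lemma Phi_zero : Phi 0 = 1 / 2 := by
  have h := Phi_neg 0
  rw [neg_zero] at h
  linarith

lemma Phi_sub_Phi (a b : ℝ) : Phi b - Phi a = ∫ t in a..b, phi t :=
  intervalIntegral.integral_Iic_sub_Iic integrable_phi.integrableOn integrable_phi.integrableOn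

lemma sub_mul_phi_le_integral_phi {a b : ℝ} (ha : 0 ≤ a) (hab : a ≤ b) :
    (b - a) * phi b ≤ ∫ t in a..b, phi t := by
  rw [← smul_eq_mul, ← intervalIntegral.integral_const]
  refine intervalIntegral.integral_mono_on hab intervalIntegrable_const
    integrable_phi.intervalIntegrable fun t ht => ?_
  exact phi_antitoneOn (ha.trans ht.1) (ha.trans hab) ht.2

/-- For all `x ≥ 0`, `x φ(x) + (1 - Φ(x)) ≤ 1/2`. -/
theorem xphi_add_tail_le_half (x : ℝ) (hx : 0 ≤ x) :
    x * phi x + (1 - Phi x) ≤ 1/2 := by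
  have hbound := sub_mul_phi_le_integral_phi le_rfl hx
  rw [← Phi_sub_Phi, Phi_zero, sub_zero] at hbound
  linarith
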